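/- arXiv:2311.00261 — 2 statements merged into one kernel-verified Lean document; each statement's English description precedes it below -/
import Mathlib

section
/- For 0 < q < 1 and |t| < 1, the continuous q-Hermite polynomials satisfy the generating function $\sum_{n=0}^\infty \frac{H_n(\cos\theta|q)}{(q;q)_n} t^n = \frac{1}{(te^{i\theta}, te^{-i\theta};q)_\infty}$. -/
noncomputable section

/-- The infinite $q$-shifted factorial $(a;q)_\infty = \prod_{k\ge 0}(1-aq^k)$. -/
def qp (q a : ℂ) : ℂ := ∏' k : ℕ, (1 - a * q ^ k)

/-- The finite $q$-shifted factorial $(a;q)_n$. -/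
def qpn (q a : ℂ) (n : ℕ) : ℂ := ∏ k ∈ Finset.range n, (1 - a * q ^ k)

/-- The generalized $q$-shifted factorial $(a;q)_\beta = (a;q)_\infty/(aq^\beta;q)_\infty$. -/
def qpr (q a β : ℂ) : ℂ := qp q a / qp q (a * q ^ β)

/-- $e^{i\theta}$. -/
def eθ (θ : ℝ) : ℂ := Complex.exp (θ * Complex.I)

/-- One factor of the function $h$: $(ae^{i\theta}, ae^{-i\theta};q)_\infty$. -/
def hf (q : ℂ) (θ : ℝ) (a : ℂ) : ℂ := qp q (a * eθ θ) * qp q (a * eθ (-θ))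

/-- The normalized weight of the continuous $q$-Hermite polynomials, as a function
of $\theta$ (so that $w_H(\cos\theta\mid q)$ is `wH q θ`). -/
def wH (q : ℂ) (θ : ℝ) : ℂ :=
  qp q q * qp q (eθ (2*θ)) * qp q (eθ (-(2*θ))) / (2 * Real.pi * Real.sin θ)

/-- The continuous $q$-Hermite polynomials: $H_0 = 1$, $H_1 = 2x$,
$2xH_n = H_{n+1} + (1-q^n)H_{n-1}$. -/
def cqH (q : ℝ) : ℕ → ℝ → ℝ
  | 0, _ => 1
  | 1, x => 2 * x
  | n+2, x => 2 * x * cqH q (n+1) x - (1 - q ^ (n+1)) * cqH q n x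

/-- Real power $q^t$, coerced into `ℂ`. -/
def qr (q t : ℝ) : ℂ := ((q ^ t : ℝ) : ℂ)

/-- The nonterminating $q$-monomial $\phi_\beta(\cos\theta; t)
  = (te^{i\theta}, te^{-i\theta}; q)_\beta$. -/
def phiB (q β t : ℂ) (θ : ℝ) : ℂ := qpr q (t * eθ θ) β * qpr q (t * eθ (-θ)) β

/-- The $q$-exponential function, defined through its continuous $q$-Hermite expansion
$(qt^2;q^2)_\infty \mathcal E_q(x;t) = \sum_n q^{n^2/4} t^n H_n(x|q)/(q;q)_n$. -/
def Eqf (q x : ℝ) (t : ℂ) : ℂ :=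
  (∑' n : ℕ, qr q ((n:ℝ)^2/4) * t ^ n / qpn q q n * (cqH q n x : ℂ)) /
    qp ((q:ℂ)^2) ((q:ℂ) * t^2)

/-- The two-parameter $q$-fractional integral operator $\mathcal K_{a,c}$, acting on
functions of $x = \cos\theta \in [-1,1]$. -/
def Kop (q a c : ℝ) (f : ℝ → ℂ) (x : ℝ) : ℂ :=
  qr q (a*(a-3)/4) * ((((1-q)/(2*c)) ^ a : ℝ) : ℂ) *
  hf q (Real.arccos x) (-(c:ℂ) * qr q (1 - a/2)) *
  hf q (Real.arccos x) (-(qr q (a/2)) / c) *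
  ∫ φ in (0:ℝ)..Real.pi,
    wH q φ * qp q (qr q a) * f (Real.cos φ) * Real.sin φ /
      (hf q φ (qr q (a/2) * eθ (Real.arccos x)) * hf q φ (qr q (a/2) * eθ (-(Real.arccos x))) *
        hf q φ (-1/(c:ℂ)) * hf q φ (-(c:ℂ) * q))

/-- The operator $\mathcal K_{a,c}$ written in the variable $z$ (with $x = (z+1/z)/2$),
so that it can be composed with the Askey--Wilson divided difference operator. -/
def Kz (q a c : ℝ) (f : ℝ → ℂ) (z : ℂ) : ℂ :=
  qr q (a*(a-3)/4) * ((((1-q)/(2*c)) ^ a : ℝ) : ℂ) *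
  (qp q (-(c:ℂ) * qr q (1 - a/2) * z) * qp q (-(c:ℂ) * qr q (1 - a/2) / z)) *
  (qp q (-(qr q (a/2)) / c * z) * qp q (-(qr q (a/2)) / (c * z))) *
  ∫ φ in (0:ℝ)..Real.pi,
    wH q φ * qp q (qr q a) * f (Real.cos φ) * Real.sin φ /
      (hf q φ (qr q (a/2) * z) * hf q φ (qr q (a/2) / z) *
        hf q φ (-1/(c:ℂ)) * hf q φ (-(c:ℂ) * q))

/-- The Askey--Wilson divided difference operator $\mathcal D_q$, acting on functions
written in the variable $z$ (with $x = (z + 1/z)/2$). -/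
def Dq (q : ℝ) (f : ℂ → ℂ) (z : ℂ) : ℂ :=
  (f (qr q (1/2) * z) - f (z / qr q (1/2))) /
    ((qr q (1/2) - qr q (-(1/2))) * (z - 1/z) / 2)

/-- The three-parameter family of operators $T(a,b,r)$, acting on functions of
$x = \cos\theta \in [-1,1]$. -/
def Tabr (q : ℝ) (a b : ℂ) (r : ℝ) (f : ℝ → ℂ) (x : ℝ) : ℂ :=
  hf q (Real.arccos x) a * hf q (Real.arccos x) b * qp q ((r:ℂ)^2) *
  ∫ φ in (0:ℝ)..Real.pi,
    wH q φ * f (Real.cos φ) * Real.sin φ /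
      (hf q φ ((r:ℂ) * eθ (Real.arccos x)) * hf q φ ((r:ℂ) * eθ (-(Real.arccos x))) *
        hf q φ a * hf q φ b)

/-- The Askey--Wilson polynomial $p_n(\cos\theta; a, b, c, d)$. -/
def awp (q : ℂ) (n : ℕ) (a b c d : ℂ) (θ : ℝ) : ℂ :=
  qpn q (a*b) n * qpn q (a*c) n * qpn q (a*d) n * a ^ (-(n:ℤ)) *
  ∑ k ∈ Finset.range (n+1),
    qpn q (q ^ (-(n:ℤ))) k * qpn q (q ^ ((n:ℤ)-1) * a * b * c * d) k *
      qpn q (a * eθ θ) k * qpn q (a * eθ (-θ)) k /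
      (qpn q q k * qpn q (a*b) k * qpn q (a*c) k * qpn q (a*d) k) * q ^ k

/-- The Askey--Wilson weight function $w(\cos\theta; t_1,t_2,t_3,t_4)$. -/
def aww (q t1 t2 t3 t4 : ℂ) (θ : ℝ) : ℂ :=
  qp q (eθ (2*θ)) * qp q (eθ (-(2*θ))) /
    (hf q θ t1 * hf q θ t2 * hf q θ t3 * hf q θ t4)

end
open Filter Topology Finset

namespace QHGF

variable {q : ℝ}

noncomputable def qq (q : ℝ) (n : ℕ) : ℝ := ∏ k ∈ Finset.range n, (1 - q * q ^ k)

lemma qq_zero (q : ℝ) : qq q 0 = 1 := Finset.prod_range_zero _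

lemma qq_succ (q : ℝ) (n : ℕ) : qq q (n+1) = qq q n * (1 - q * q ^ n) :=
  Finset.prod_range_succ _ _

lemma fact_pos (hq : 0 < q) (hq1 : q < 1) (n : ℕ) : 0 < 1 - q * q ^ n := by
  have h1 : q ^ n ≤ 1 := pow_le_one₀ hq.le hq1.le
  nlinarith

lemma qq_pos (hq : 0 < q) (hq1 : q < 1) (n : ℕ) : 0 < qq q n :=
  Finset.prod_pos fun k _ => fact_pos hq hq1 k

lemma qpn_eq (n : ℕ) : qpn (q : ℂ) (q : ℂ) n = ((qq q n : ℝ) : ℂ) := by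
  unfold qpn qq; push_cast; rfl

/-- the q-binomial-like coefficients -/
noncomputable def bb (q : ℝ) (n k : ℕ) : ℝ :=
  if k ≤ n then qq q n / (qq q k * qq q (n - k)) else 0

lemma bb_zero (hq : 0 < q) (hq1 : q < 1) (n : ℕ) : bb q n 0 = 1 := by
  rw [bb, if_pos (Nat.zero_le n), qq_zero, one_mul, Nat.sub_zero,
    div_self (qq_pos hq hq1 n).ne']

lemma bb_self (hq : 0 < q) (hq1 : q < 1) (n : ℕ) : bb q n n = 1 := by
  rw [bb, if_pos le_rfl, Nat.sub_self, qq_zero, mul_one,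
    div_self (qq_pos hq hq1 n).ne']

lemma bb_of_lt {n k : ℕ} (h : n < k) : bb q n k = 0 := if_neg (not_le.2 h)

lemma bb_pascal (hq : 0 < q) (hq1 : q < 1) {n k : ℕ} (hk : k ≤ n) :
    bb q (n+2) (k+1)
      = bb q (n+1) (k+1) + bb q (n+1) k - (1 - q ^ (n+1)) * bb q n k := by
  obtain ⟨j, rfl⟩ := Nat.exists_eq_add_of_le hk
  have h1 : k + 1 ≤ k + j + 2 := by omega
  have h2 : k + 1 ≤ k + j + 1 := by omega
  have h3 : k ≤ k + j + 1 := by omega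
  have h4 : k ≤ k + j := by omega
  rw [bb, bb, bb, bb, if_pos h1, if_pos h2, if_pos h3, if_pos h4]
  have e1 : k + j + 2 - (k + 1) = j + 1 := by omega
  have e2 : k + j + 1 - (k + 1) = j := by omega
  have e3 : k + j + 1 - k = j + 1 := by omega
  have e4 : k + j - k = j := by omega
  rw [e1, e2, e3, e4]
  have hk0 := (qq_pos hq hq1 k).ne'
  have hj0 := (qq_pos hq hq1 j).ne'
  have hfk := (fact_pos hq hq1 k).ne'
  have hfj := (fact_pos hq hq1 j).ne'
  have hfkj := (fact_pos hq hq1 (k + j)).ne'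
  have hfkj1 := (fact_pos hq hq1 (k + j + 1)).ne'
  rw [show k + j + 2 = (k + j + 1) + 1 from rfl, qq_succ, qq_succ, qq_succ, qq_succ]
  field_simp
  ring

lemma bb_pascal_all (hq : 0 < q) (hq1 : q < 1) (n k : ℕ) :
    bb q (n+2) (k+1)
      = bb q (n+1) (k+1) + bb q (n+1) k - (1 - q ^ (n+1)) * bb q n k := by
  rcases le_or_gt k n with hk | hk
  · exact bb_pascal hq hq1 hk
  rcases eq_or_lt_of_le (Nat.succ_le_of_lt hk) with rfl | hk2
  · rw [bb_self hq hq1, bb_self hq hq1, bb_of_lt (by omega), bb_of_lt (by omega)]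
    ring
  · rw [bb_of_lt (by omega), bb_of_lt (by omega), bb_of_lt (by omega),
      bb_of_lt (by omega)]
    ring

lemma sumrec (hq : 0 < q) (hq1 : q < 1) (w : ℂ) (n : ℕ) :
    (∑ k ∈ Finset.range (n+3), (bb q (n+2) k : ℂ) * w ^ k)
      = (∑ k ∈ Finset.range (n+2), (bb q (n+1) k : ℂ) * w ^ k)
        + w * (∑ k ∈ Finset.range (n+2), (bb q (n+1) k : ℂ) * w ^ k)
        - (1 - (q:ℂ) ^ (n+1)) * w * ∑ k ∈ Finset.range (n+1), (bb q n k : ℂ) * w ^ k := by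
  have key : ∀ k : ℕ, (bb q (n+2) (k+1) : ℂ)
      = (bb q (n+1) (k+1) : ℂ) + (bb q (n+1) k : ℂ)
        - (1 - (q:ℂ) ^ (n+1)) * (bb q n k : ℂ) := by
    intro k
    have h := congrArg (fun r : ℝ => (r : ℂ)) (bb_pascal_all hq hq1 n k)
    push_cast at h
    exact h
  have hA : (∑ k ∈ Finset.range (n+2), (bb q (n+1) (k+1) : ℂ) * w ^ (k+1))
      = ∑ k ∈ Finset.range (n+1), (bb q (n+1) (k+1) : ℂ) * w ^ (k+1) := by
    rw [Finset.sum_range_succ, bb_of_lt (by omega)]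
    push_cast; ring
  have hS1 : (∑ k ∈ Finset.range (n+2), (bb q (n+1) k : ℂ) * w ^ k)
      = (1:ℂ) + ∑ k ∈ Finset.range (n+1), (bb q (n+1) (k+1) : ℂ) * w ^ (k+1) := by
    rw [Finset.sum_range_succ' _ (n+1), bb_zero hq hq1]
    push_cast; ring
  have hB : (∑ k ∈ Finset.range (n+2), (bb q (n+1) k : ℂ) * w ^ (k+1))
      = w * ∑ k ∈ Finset.range (n+2), (bb q (n+1) k : ℂ) * w ^ k := by
    rw [Finset.mul_sum]
    exact Finset.sum_congr rfl fun k _ => by ring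
  have hC : (∑ k ∈ Finset.range (n+2), ((1 - (q:ℂ) ^ (n+1)) * (bb q n k : ℂ)) * w ^ (k+1))
      = (1 - (q:ℂ) ^ (n+1)) * w * ∑ k ∈ Finset.range (n+1), (bb q n k : ℂ) * w ^ k := by
    rw [Finset.sum_range_succ, bb_of_lt (by omega), Finset.mul_sum]
    push_cast
    rw [show (∑ k ∈ Finset.range (n+1), (1 - (q:ℂ)^(n+1)) * w * ((bb q n k : ℂ) * w ^ k))
        = ∑ k ∈ Finset.range (n+1), ((1 - (q:ℂ)^(n+1)) * (bb q n k : ℂ)) * w ^ (k+1) from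
      Finset.sum_congr rfl fun k _ => by ring]
    ring
  rw [Finset.sum_range_succ' _ (n+2)]
  rw [show (∑ k ∈ Finset.range (n+2), (bb q (n+2) (k+1) : ℂ) * w ^ (k+1))
      = (∑ k ∈ Finset.range (n+2), (bb q (n+1) (k+1) : ℂ) * w ^ (k+1))
        + (∑ k ∈ Finset.range (n+2), (bb q (n+1) k : ℂ) * w ^ (k+1))
        - (∑ k ∈ Finset.range (n+2), ((1 - (q:ℂ) ^ (n+1)) * (bb q n k : ℂ)) * w ^ (k+1)) from by
    rw [← Finset.sum_add_distrib, ← Finset.sum_sub_distrib]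
    exact Finset.sum_congr rfl fun k _ => by rw [key k]; ring]
  rw [hA, hB, hC, bb_zero hq hq1, hS1]
  push_cast; ring

lemma e_mul_e (θ : ℝ) : eθ θ * eθ (-θ) = 1 := by
  rw [eθ, eθ, ← Complex.exp_add]
  push_cast
  rw [show (θ:ℂ) * Complex.I + -θ * Complex.I = 0 by ring, Complex.exp_zero]

lemma two_cos (θ : ℝ) : 2 * Complex.cos (θ : ℂ) = eθ θ + eθ (-θ) := by
  rw [Complex.cos, eθ, eθ]
  push_cast
  ring

lemma Hform (hq : 0 < q) (hq1 : q < 1) (θ : ℝ) (n : ℕ) :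
    (cqH q n (Real.cos θ) : ℂ)
      = eθ θ ^ n * ∑ k ∈ Finset.range (n+1), (bb q n k : ℂ) * (eθ (-θ) * eθ (-θ)) ^ k := by
  induction n using Nat.twoStepInduction with
  | zero =>
    simp [cqH, bb_zero hq hq1]
  | one =>
    rw [show cqH q 1 (Real.cos θ) = 2 * Real.cos θ from rfl]
    rw [Finset.sum_range_succ, Finset.sum_range_one, bb_zero hq hq1, bb_self hq hq1]
    have he := e_mul_e θ
    push_cast
    rw [two_cos θ]
    linear_combination (-(eθ (-θ))) * he
  | more n ih1 ih2 =>
    rw [show cqH q (n+2) (Real.cos θ)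
        = 2 * Real.cos θ * cqH q (n+1) (Real.cos θ) - (1 - q^(n+1)) * cqH q n (Real.cos θ)
      from rfl]
    push_cast
    rw [two_cos θ, ih1, ih2, sumrec hq hq1 (eθ (-θ) * eθ (-θ)) n]
    have he := e_mul_e θ
    have hne : eθ θ ≠ 0 := Complex.exp_ne_zero _
    have hem : eθ (-θ) = (eθ θ)⁻¹ := eq_inv_of_mul_eq_one_right
      (by linear_combination he)
    rw [hem]
    field_simp
    ring

lemma norm_term (hq : 0 < q) (hq1 : q < 1) (x : ℂ) (n : ℕ) :
    ‖x ^ n / (qq q n : ℂ)‖ = ‖x‖ ^ n / qq q n := by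
  rw [norm_div, norm_pow, Complex.norm_real, Real.norm_eq_abs,
    abs_of_pos (qq_pos hq hq1 n)]

lemma summable_norm_aux (hq : 0 < q) (hq1 : q < 1) (x : ℂ) (hx : ‖x‖ < 1) :
    Summable (fun n => ‖x ^ n / (qq q n : ℂ)‖) := by
  have hrw : (fun n => ‖x ^ n / (qq q n : ℂ)‖) = fun n => ‖x‖ ^ n / qq q n :=
    funext (norm_term hq hq1 x)
  rw [hrw]
  rcases eq_or_ne x 0 with rfl | hx0
  · apply Summable.of_norm_bounded_eventually_nat (g := fun _ => (0:ℝ)) summable_zero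
    filter_upwards [eventually_ge_atTop 1] with n hn
    simp [zero_pow (by omega : n ≠ 0)]
  · have hx0' : ‖x‖ ≠ 0 := norm_ne_zero_iff.2 hx0
    apply summable_of_ratio_test_tendsto_lt_one hx
    · filter_upwards with n
      exact div_ne_zero (pow_ne_zero n hx0') (qq_pos hq hq1 n).ne'
    · have h1 : Tendsto (fun n : ℕ => 1 - q * q ^ n) atTop (𝓝 1) := by
        have := (tendsto_pow_atTop_nhds_zero_of_lt_one hq.le hq1).const_mul q
        simpa using (tendsto_const_nhds (x := (1:ℝ))).sub this
      have h2 : Tendsto (fun n : ℕ => ‖x‖ / (1 - q * q ^ n)) atTop (𝓝 (‖x‖ / 1)) :=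
        tendsto_const_nhds.div h1 one_ne_zero
      rw [div_one] at h2
      apply h2.congr'
      filter_upwards with n
      have hq0 := (qq_pos hq hq1 n).ne'
      have hq1' := (qq_pos hq hq1 (n+1)).ne'
      have hf0 := (fact_pos hq hq1 n).ne'
      have hnx : 0 < ‖x‖ := (norm_nonneg x).lt_of_ne (Ne.symm hx0')
      have hd : ‖x‖ ^ n / qq q n ≠ 0 :=
        (div_pos (pow_pos hnx n) (qq_pos hq hq1 n)).ne'
      rw [Real.norm_eq_abs, Real.norm_eq_abs,
        abs_of_pos (div_pos (pow_pos hnx (n+1)) (qq_pos hq hq1 (n+1))),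
        abs_of_pos (div_pos (pow_pos hnx n) (qq_pos hq hq1 n))]
      rw [show ‖x‖ ^ (n+1) / qq q (n+1)
          = (‖x‖ / (1 - q * q ^ n)) * (‖x‖ ^ n / qq q n) from by
        rw [qq_succ, pow_succ]; field_simp]
      rw [mul_div_assoc, div_self hd, mul_one]

lemma summable_aux (hq : 0 < q) (hq1 : q < 1) (x : ℂ) (hx : ‖x‖ < 1) :
    Summable (fun n => x ^ n / (qq q n : ℂ)) :=
  (summable_norm_aux hq hq1 x hx).of_norm

set_option maxHeartbeats 1000000 in
lemma funceq (hq : 0 < q) (hq1 : q < 1) (x : ℂ) (hx : ‖x‖ < 1) :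
    (1 - x) * (∑' n : ℕ, x ^ n / (qq q n : ℂ)) = ∑' n : ℕ, ((q:ℂ) * x) ^ n / (qq q n : ℂ) := by
  have hqx : ‖(q:ℂ) * x‖ < 1 := by
    rw [norm_mul, Complex.norm_real, Real.norm_eq_abs, abs_of_pos hq]
    nlinarith [norm_nonneg x]
  have hsx := summable_aux hq hq1 x hx
  have hsqx := summable_aux hq hq1 ((q:ℂ) * x) hqx
  have hshift : Summable (fun n : ℕ => x ^ (n+1) / (qq q (n+1) : ℂ)) :=
    (summable_nat_add_iff 1).2 hsx
  have hshiftq : Summable (fun n : ℕ => ((q:ℂ) * x) ^ (n+1) / (qq q (n+1) : ℂ)) :=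
    (summable_nat_add_iff 1).2 hsqx
  have h1 : (∑' n : ℕ, x ^ n / (qq q n : ℂ))
      = 1 + ∑' n : ℕ, x ^ (n+1) / (qq q (n+1) : ℂ) := by
    rw [Summable.tsum_eq_zero_add hsx, pow_zero, qq_zero]
    norm_num
  have h2 : (∑' n : ℕ, ((q:ℂ) * x) ^ n / (qq q n : ℂ))
      = 1 + ∑' n : ℕ, ((q:ℂ) * x) ^ (n+1) / (qq q (n+1) : ℂ) := by
    rw [Summable.tsum_eq_zero_add hsqx, pow_zero, qq_zero]
    norm_num
  have key : (∑' n : ℕ, x ^ (n+1) / (qq q (n+1) : ℂ))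
      - (∑' n : ℕ, ((q:ℂ) * x) ^ (n+1) / (qq q (n+1) : ℂ))
      = x * ∑' n : ℕ, x ^ n / (qq q n : ℂ) := by
    rw [← Summable.tsum_sub hshift hshiftq, ← tsum_mul_left]
    apply tsum_congr
    intro n
    have hqqn := (qq_pos hq hq1 n).ne'
    have hqq1 := (qq_pos hq hq1 (n+1)).ne'
    have hf := (fact_pos hq hq1 n).ne'
    have hcast : ((qq q (n+1) : ℝ) : ℂ) = (qq q n : ℂ) * (1 - (q:ℂ) * (q:ℂ) ^ n) := by
      rw [qq_succ]; push_cast; ring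
    rw [hcast, mul_pow]
    have hqqnC : (qq q n : ℂ) ≠ 0 := by exact_mod_cast
      (Complex.ofReal_ne_zero.2 hqqn)
    have hfC : (1 - (q:ℂ) * (q:ℂ) ^ n) ≠ 0 := by
      have : ((1 - q * q ^ n : ℝ) : ℂ) ≠ 0 := Complex.ofReal_ne_zero.2 hf
      push_cast at this
      exact this
    field_simp
    ring
  linear_combination h1 + key - h2

lemma qnorm_lt (hq : 0 < q) (hq1 : q < 1) : ‖(q:ℂ)‖ < 1 := by
  rw [Complex.norm_real, Real.norm_eq_abs, abs_of_pos hq]; exact hq1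

lemma norm_qpow_mul_le (hq : 0 < q) (hq1 : q < 1) (x : ℂ) (N : ℕ) :
    ‖(q:ℂ) ^ N * x‖ ≤ ‖x‖ := by
  rw [norm_mul, norm_pow, Complex.norm_real, Real.norm_eq_abs, abs_of_pos hq]
  nlinarith [pow_le_one₀ hq.le hq1.le (n := N), pow_pos hq N, norm_nonneg x,
    pow_nonneg hq.le N]

lemma iterate_eq (hq : 0 < q) (hq1 : q < 1) (x : ℂ) (hx : ‖x‖ < 1) (N : ℕ) :
    (∏ k ∈ Finset.range N, (1 - x * (q:ℂ) ^ k)) * (∑' n : ℕ, x ^ n / (qq q n : ℂ))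
      = ∑' n : ℕ, ((q:ℂ) ^ N * x) ^ n / (qq q n : ℂ) := by
  induction N with
  | zero => simp
  | succ N ih =>
    have hx' : ‖(q:ℂ) ^ N * x‖ < 1 := lt_of_le_of_lt (norm_qpow_mul_le hq hq1 x N) hx
    have hfe := funceq hq hq1 ((q:ℂ) ^ N * x) hx'
    rw [Finset.prod_range_succ]
    calc (∏ k ∈ Finset.range N, (1 - x * (q:ℂ) ^ k)) * (1 - x * (q:ℂ) ^ N)
          * (∑' n : ℕ, x ^ n / (qq q n : ℂ))
        = (1 - x * (q:ℂ) ^ N) * ((∏ k ∈ Finset.range N, (1 - x * (q:ℂ) ^ k))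
            * (∑' n : ℕ, x ^ n / (qq q n : ℂ))) := by ring
      _ = (1 - (q:ℂ) ^ N * x) * ∑' n : ℕ, ((q:ℂ) ^ N * x) ^ n / (qq q n : ℂ) := by
          rw [ih]; ring_nf
      _ = ∑' n : ℕ, ((q:ℂ) * ((q:ℂ) ^ N * x)) ^ n / (qq q n : ℂ) := hfe
      _ = ∑' n : ℕ, ((q:ℂ) ^ (N+1) * x) ^ n / (qq q n : ℂ) := by
          apply tsum_congr; intro n; rw [show (q:ℂ) * ((q:ℂ) ^ N * x) = (q:ℂ)^(N+1) * x by ring]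

lemma factor_ne_zero (x : ℂ) (hx : ‖x‖ < 1) (k : ℕ) (hqk : ‖(q:ℂ)‖ < 1) (hq0 : 0 ≤ q) :
    (1 : ℂ) - x * (q:ℂ) ^ k ≠ 0 := by
  intro h
  have hx1 : x * (q:ℂ) ^ k = 1 := by linear_combination -h
  have : ‖x * (q:ℂ) ^ k‖ < 1 := by
    rw [norm_mul, norm_pow]
    calc ‖x‖ * ‖(q:ℂ)‖ ^ k ≤ ‖x‖ * 1 := by
          have := pow_le_one₀ (norm_nonneg (q:ℂ)) hqk.le (n := k)
          nlinarith [norm_nonneg x]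
      _ = ‖x‖ := mul_one _
      _ < 1 := hx
  rw [hx1, norm_one] at this
  exact lt_irrefl 1 this

lemma multipliable_aux (hq : 0 < q) (hq1 : q < 1) (x : ℂ) (hx : ‖x‖ < 1) :
    Multipliable (fun k : ℕ => 1 - x * (q:ℂ) ^ k) := by
  have hqk := qnorm_lt hq hq1
  apply Complex.multipliable_of_summable_log
  apply Summable.of_norm_bounded_eventually_nat (g := fun k => 3/2 * ‖x‖ * q ^ k)
    (((summable_geometric_of_lt_one hq.le hq1).mul_left (3/2 * ‖x‖)).congr
      (fun k => by ring))
  have h0 : Tendsto (fun k : ℕ => ‖x‖ * q ^ k) atTop (𝓝 0) := by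
    simpa using (tendsto_pow_atTop_nhds_zero_of_lt_one hq.le hq1).const_mul ‖x‖
  filter_upwards [h0.eventually_lt_const (by norm_num : (0:ℝ) < 1/2)] with k hk
  have hxq : ‖x * (q:ℂ) ^ k‖ = ‖x‖ * q ^ k := by
    rw [norm_mul, norm_pow, Complex.norm_real, Real.norm_eq_abs, abs_of_pos hq]
  have hhalf : ‖-(x * (q:ℂ) ^ k)‖ ≤ 1/2 := by rw [norm_neg, hxq]; exact hk.le
  have hlog := Complex.norm_log_one_add_half_le_self hhalf
  rw [show (1 : ℂ) + -(x * (q:ℂ) ^ k) = 1 - x * (q:ℂ) ^ k by ring] at hlog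
  calc ‖Complex.log (1 - x * (q:ℂ) ^ k)‖ ≤ 3/2 * ‖-(x * (q:ℂ) ^ k)‖ := hlog
    _ = 3/2 * ‖x‖ * q ^ k := by rw [norm_neg, hxq]; ring

lemma tendsto_F_one (hq : 0 < q) (hq1 : q < 1) (x : ℂ) (hx : ‖x‖ < 1) :
    Tendsto (fun N : ℕ => ∑' n : ℕ, ((q:ℂ) ^ N * x) ^ n / (qq q n : ℂ)) atTop (𝓝 1) := by
  have hbound := summable_norm_aux hq hq1 x hx
  have hgoal : Tendsto (fun N : ℕ => ∑' n : ℕ, ((q:ℂ) ^ N * x) ^ n / (qq q n : ℂ)) atTop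
      (𝓝 (∑' n : ℕ, (if n = 0 then (1:ℂ) else 0))) := by
    apply tendsto_tsum_of_dominated_convergence hbound
    · intro n
      rcases eq_or_ne n 0 with rfl | hn
      · simp [qq_zero]
      · simp only [if_neg hn]
        have hq0 : Tendsto (fun N : ℕ => (q:ℂ) ^ N * x) atTop (𝓝 0) := by
          simpa using (tendsto_pow_atTop_nhds_zero_of_norm_lt_one
            (qnorm_lt hq hq1)).mul_const x
        have := (hq0.pow n).div_const ((qq q n : ℝ) : ℂ)
        rwa [zero_pow hn, zero_div] at this
    · filter_upwards with N n
      rw [norm_term hq hq1, norm_term hq hq1]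
      have h1 : ‖(q:ℂ) ^ N * x‖ ≤ ‖x‖ := norm_qpow_mul_le hq hq1 x N
      have h2 : ‖(q:ℂ) ^ N * x‖ ^ n ≤ ‖x‖ ^ n :=
        pow_le_pow_left₀ (norm_nonneg _) h1 n
      exact (div_le_div_iff_of_pos_right (qq_pos hq hq1 n)).2 h2
  have : (∑' n : ℕ, (if n = 0 then (1:ℂ) else 0)) = 1 := by
    rw [tsum_eq_single 0 (fun n hn => if_neg hn)]
    simp
  rwa [this] at hgoal


lemma euler (hq : 0 < q) (hq1 : q < 1) (x : ℂ) (hx : ‖x‖ < 1) :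
    qp (q:ℂ) x * (∑' n : ℕ, x ^ n / (qq q n : ℂ)) = 1 := by
  have hmult := multipliable_aux hq hq1 x hx
  have hprod : Tendsto (fun N : ℕ => ∏ k ∈ Finset.range N, (1 - x * (q:ℂ) ^ k)) atTop
      (𝓝 (qp (q:ℂ) x)) := hmult.hasProd.tendsto_prod_nat
  have h1 : Tendsto (fun N : ℕ => (∏ k ∈ Finset.range N, (1 - x * (q:ℂ) ^ k))
      * (∑' n : ℕ, x ^ n / (qq q n : ℂ))) atTop
      (𝓝 (qp (q:ℂ) x * (∑' n : ℕ, x ^ n / (qq q n : ℂ)))) :=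
    hprod.mul_const _
  have h2 : Tendsto (fun N : ℕ => (∏ k ∈ Finset.range N, (1 - x * (q:ℂ) ^ k))
      * (∑' n : ℕ, x ^ n / (qq q n : ℂ))) atTop (𝓝 1) := by
    have := tendsto_F_one hq hq1 x hx
    apply this.congr
    intro N
    exact (iterate_eq hq hq1 x hx N).symm
  exact tendsto_nhds_unique h1 h2

end QHGF


open QHGF Finset

/-- Generating function for the continuous $q$-Hermite polynomials. -/
theorem qHermite_generating_function (q : ℝ) (hq : 0 < q) (hq1 : q < 1)
    (t : ℂ) (ht : ‖t‖ < 1) (θ : ℝ) :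
    ∑' n : ℕ, (cqH q n (Real.cos θ) : ℂ) / qpn q q n * t ^ n
      = 1 / (qp q (t * eθ θ) * qp q (t * eθ (-θ))) := by
  have he : eθ θ * eθ (-θ) = 1 := e_mul_e θ
  have hnt : ‖t‖ < 1 := ht
  have hne : ∀ φ : ℝ, ‖eθ φ‖ = 1 := fun φ => by
    rw [eθ, Complex.norm_exp_ofReal_mul_I]
  have hu : ‖t * eθ θ‖ < 1 := by rw [norm_mul, hne θ, mul_one]; exact hnt
  have hv : ‖t * eθ (-θ)‖ < 1 := by rw [norm_mul, hne (-θ), mul_one]; exact hnt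
  have hsv := summable_norm_aux hq hq1 (t * eθ (-θ)) hv
  have hsu := summable_norm_aux hq hq1 (t * eθ θ) hu
  have hcauchy := tsum_mul_tsum_eq_tsum_sum_range_of_summable_norm hsv hsu
  have hterm : ∀ n : ℕ, (cqH q n (Real.cos θ) : ℂ) / qpn q q n * t ^ n
      = ∑ k ∈ Finset.range (n+1),
          ((t * eθ (-θ)) ^ k / (qq q k : ℂ))
            * ((t * eθ θ) ^ (n - k) / (qq q (n - k) : ℂ)) := by
    intro n
    rw [qpn_eq, Hform hq hq1 θ n, Finset.mul_sum, Finset.sum_div, Finset.sum_mul]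
    apply Finset.sum_congr rfl
    intro k hk
    have hk' : k ≤ n := Finset.mem_range_succ_iff.1 hk
    have hbb : (bb q n k : ℂ) = (qq q n : ℂ) / ((qq q k : ℂ) * (qq q (n-k) : ℂ)) := by
      rw [bb, if_pos hk']; push_cast; ring
    have hy : eθ θ ^ (n-k) * eθ θ ^ k = eθ θ ^ n := by
      rw [← pow_add, Nat.sub_add_cancel hk']
    have ht' : t ^ k * t ^ (n-k) = t ^ n := by
      rw [← pow_add, Nat.add_sub_cancel' hk']
    have hone : eθ θ ^ k * eθ (-θ) ^ k = 1 := by rw [← mul_pow, he, one_pow]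
    have hexp : eθ θ ^ n * (eθ (-θ) * eθ (-θ)) ^ k * t ^ n
        = (t * eθ (-θ)) ^ k * (t * eθ θ) ^ (n-k) := by
      rw [mul_pow, mul_pow, mul_pow]
      linear_combination (-(eθ (-θ) ^ k * eθ (-θ) ^ k * t ^ n)) * hy
        + (eθ (-θ) ^ k * t ^ n * eθ θ ^ (n-k)) * hone
        - (eθ (-θ) ^ k * eθ θ ^ (n-k)) * ht'
    have hqn := (qq_pos hq hq1 n).ne'
    have hqk := (qq_pos hq hq1 k).ne'
    have hqnk := (qq_pos hq hq1 (n-k)).ne'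
    have hqnC : (qq q n : ℂ) ≠ 0 := Complex.ofReal_ne_zero.2 hqn
    have hqkC : (qq q k : ℂ) ≠ 0 := Complex.ofReal_ne_zero.2 hqk
    have hqnkC : (qq q (n-k) : ℂ) ≠ 0 := Complex.ofReal_ne_zero.2 hqnk
    rw [div_mul_div_comm, ← hexp, hbb]
    field_simp
  rw [tsum_congr hterm, ← hcauchy]
  have hEu := euler hq hq1 (t * eθ θ) hu
  have hEv := euler hq hq1 (t * eθ (-θ)) hv
  have hFu : (∑' n : ℕ, (t * eθ θ) ^ n / (qq q n : ℂ)) = 1 / qp (q:ℂ) (t * eθ θ) :=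
    eq_one_div_of_mul_eq_one_left (by linear_combination hEu)
  have hFv : (∑' n : ℕ, (t * eθ (-θ)) ^ n / (qq q n : ℂ)) = 1 / qp (q:ℂ) (t * eθ (-θ)) :=
    eq_one_div_of_mul_eq_one_left (by linear_combination hEv)
  rw [hFu, hFv, div_mul_div_comm, one_mul, mul_comm]
end

section
/- Let $\{p_n\}$ be orthonormal polynomials with respect to a probability measure $\mu$ on a compact interval $[a,b]$, and suppose the Poisson kernel $P_r(x,y) = \sum_{n=0}^\infty p_n(x)p_n(y)r^n$ converges and is nonnegative for all $x,y$ in the support of $\mu$ and $0<r<1$. Then for every continuous function $f$ on $[a,b]$, $\int_a^b P_r(x,y) f(y)\,d\mu(y) \to f(x)$ uniformly on $[a,b]$ as $r \to 1^-$. -/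
/-! The operators `L_r g (x) = ∫ P_r(x, y) g(y) dμ(y)` are positive, and orthonormality gives
`L_r p_n = r ^ n p_n`; since the `p_n` span `ℝ[X]`, `L_r q → q` uniformly on `[a, b]` for every
polynomial `q`. Korovkin's argument upgrades this from the test functions `1, y, y²` to every
continuous `f`: uniform continuity gives `|f y - f x| ≤ ε + c (y - x)²`, and positivity turns
this into
`|L_r f (x) - f x| ≤ ε L_r 1 (x) + c L_r[(· - x)²](x) + |f x| |L_r 1 (x) - 1|`,
whose right-hand side tends to `ε` uniformly. Exchanging the series and the integral is justified
by `∑ |p_n(x)| rⁿ < ∞` and `∫ |p_n| dμ ≤ 1`. -/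

open MeasureTheory Filter Set Polynomial Topology

theorem Polynomial.span_range_eq_top_of_natDegree_eq {K : Type*} [Field K] {p : ℕ → K[X]}
    (hne : ∀ n, p n ≠ 0) (hdeg : ∀ n, (p n).natDegree = n) :
    Submodule.span K (range p) = ⊤ :=
  Sequence.span ⟨p, fun n => (degree_eq_iff_natDegree_eq (hne n)).mpr (hdeg n)⟩
    fun n => isUnit_iff_ne_zero.mpr (leadingCoeff_ne_zero.mpr (hne n))

theorem TendstoUniformlyOn.of_continuous_uncurry {α β γ : Type*} [UniformSpace α]
    [WeaklyLocallyCompactSpace α] [UniformSpace β] [UniformSpace γ] {G : α → β → γ}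
    (hG : Continuous (Function.uncurry G)) {s : Set β} (hs : IsCompact s) (a : α) :
    TendstoUniformlyOn G (G a) (𝓝 a) s := by
  have := isCompact_iff_compactSpace.mp hs
  rw [tendstoUniformlyOn_iff_tendstoUniformly_comp_coe]
  exact Continuous.tendstoUniformly (fun a (x : s) => G a x)
    (hG.comp (continuous_id.prodMap continuous_subtype_val)) a

theorem TendstoUniformlyOn.mono_filter {ι α β : Type*} [UniformSpace β] {F : ι → α → β}
    {f : α → β} {l l' : Filter ι} {s : Set α} (h : TendstoUniformlyOn F f l s) (hl : l' ≤ l) :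
    TendstoUniformlyOn F f l' s :=
  fun u hu => (h u hu).filter_mono hl

theorem ContinuousOn.aestronglyMeasurable_of_ae_mem {α β : Type*} [MeasurableSpace α]
    [TopologicalSpace α] [OpensMeasurableSpace α] [TopologicalSpace β]
    [TopologicalSpace.PseudoMetrizableSpace β] [SecondCountableTopologyEither α β]
    {μ : Measure α} {f : α → β} {s : Set α} (hf : ContinuousOn f s) (hs : MeasurableSet s)
    (hμs : ∀ᵐ y ∂μ, y ∈ s) : AEStronglyMeasurable f μ := by
  have := hf.aestronglyMeasurable (μ := μ) hs
  rwa [Measure.restrict_eq_self_of_ae_mem hμs] at this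

theorem ContinuousOn.integrable_of_ae_mem {μ : Measure ℝ} [IsFiniteMeasure μ] {s : Set ℝ}
    (hs : IsCompact s) (hμs : ∀ᵐ y ∂μ, y ∈ s) {f : ℝ → ℝ} (hf : ContinuousOn f s) :
    Integrable f μ := by
  obtain ⟨C, hC⟩ := hs.exists_bound_of_continuousOn hf
  exact .of_bound (hf.aestronglyMeasurable_of_ae_mem hs.measurableSet hμs) C (hμs.mono hC)

section Integration

variable {α : Type*} [MeasurableSpace α] {μ : Measure α}

theorem MeasureTheory.integrable_tsum_of_summable_integral_norm {E : Type*}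
    [NormedAddCommGroup E] [CompleteSpace E] {F : ℕ → α → E}
    (hF_int : ∀ n, Integrable (F n) μ) (hF_sum : Summable fun n => ∫ a, ‖F n a‖ ∂μ) :
    Integrable (fun a => ∑' n, F n a) μ := by
  set G : ℕ → Lp E 1 μ := fun n => (hF_int n).toL1 (F n)
  have hG : ∑' n, ‖G n‖ₑ ≠ ⊤ := by
    simp_rw [← ofReal_norm, G, L1.norm_of_fun_eq_integral_norm]
    rw [← ENNReal.ofReal_tsum_of_nonneg (fun n => integral_nonneg fun _ => norm_nonneg _) hF_sum]
    exact ENNReal.ofReal_ne_top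
  have hGF : ∀ᵐ a ∂μ, ∀ n, G n a = F n a := ae_all_iff.mpr fun n => (hF_int n).coeFn_toL1
  refine (L1.integrable_coeFn (∑' n, G n)).congr ?_
  filter_upwards [Lp.coeFn_tsum hG, hGF] with a hsum hGFa
  rw [hsum]
  exact tsum_congr hGFa

theorem MeasureTheory.integral_abs_le_one_of_integral_mul_self_eq_one [IsProbabilityMeasure μ]
    {φ : α → ℝ} (hφ : Integrable (fun y => φ y * φ y) μ) (h : ∫ y, φ y * φ y ∂μ = 1) :
    ∫ y, |φ y| ∂μ ≤ 1 := by
  have amgm : ∀ y, |φ y| ≤ 1 / 2 + 1 / 2 * (φ y * φ y) := fun y => by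
    nlinarith [sq_nonneg (|φ y| - 1), sq_abs (φ y)]
  calc ∫ y, |φ y| ∂μ ≤ ∫ y, (1 / 2 + 1 / 2 * (φ y * φ y)) ∂μ :=
        integral_mono_of_nonneg (ae_of_all _ fun _ => abs_nonneg _)
          ((integrable_const _).add (hφ.const_mul _)) (ae_of_all _ amgm)
    _ = 1 := by
        rw [integral_add (integrable_const _) (hφ.const_mul _), integral_const_mul, h]
        simp only [integral_const, probReal_univ, one_smul]
        norm_num

theorem MeasureTheory.hasSum_integral_tsum_mul {φ : ℕ → α → ℝ} (hφ : ∀ n, Integrable (φ n) μ)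
    {B : ℝ} (hB : ∀ n, ∫ y, |φ n y| ∂μ ≤ B) {c : ℕ → ℝ} (hc : Summable fun n => |c n|)
    {g : α → ℝ} (hg : AEStronglyMeasurable g μ) {C : ℝ} (hgC : ∀ᵐ y ∂μ, ‖g y‖ ≤ C) :
    Integrable (fun y => (∑' n, c n * φ n y) * g y) μ ∧
      HasSum (fun n => c n * ∫ y, φ n y * g y ∂μ) (∫ y, (∑' n, c n * φ n y) * g y ∂μ) := by
  set F : ℕ → α → ℝ := fun n y => c n * (φ n y * g y)
  have hF_int : ∀ n, Integrable (F n) μ := fun n => ((hφ n).mul_bdd hg hgC).const_mul (c n)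
  have hF_norm : ∀ n, ∫ y, ‖F n y‖ ∂μ ≤ |c n| * |C| * B := fun n => by
    calc ∫ y, ‖F n y‖ ∂μ ≤ ∫ y, |c n| * |C| * |φ n y| ∂μ := by
          refine integral_mono_ae (hF_int n).norm ((hφ n).abs.const_mul _) ?_
          filter_upwards [hgC] with y hy
          simp only [F, Real.norm_eq_abs, abs_mul] at hy ⊢
          calc |c n| * (|φ n y| * |g y|) ≤ |c n| * (|φ n y| * |C|) :=
                mul_le_mul_of_nonneg_left
                  (mul_le_mul_of_nonneg_left (hy.trans (le_abs_self C)) (abs_nonneg _))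
                  (abs_nonneg _)
            _ = |c n| * |C| * |φ n y| := by ring
      _ ≤ |c n| * |C| * B := by
          rw [integral_const_mul]
          exact mul_le_mul_of_nonneg_left (hB n) (by positivity)
  have hF_sum : Summable fun n => ∫ y, ‖F n y‖ ∂μ :=
    .of_nonneg_of_le (fun n => integral_nonneg fun _ => norm_nonneg _) hF_norm
      ((hc.mul_right |C|).mul_right B)
  have hF_tsum : (fun y => (∑' n, c n * φ n y) * g y) = fun y => ∑' n, F n y := by
    funext y
    simp only [F, ← mul_assoc]
    exact tsum_mul_right.symm
  rw [hF_tsum]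
  refine ⟨integrable_tsum_of_summable_integral_norm hF_int hF_sum, ?_⟩
  simpa only [F, integral_const_mul] using hasSum_integral_of_summable_integral_norm hF_int hF_sum

end Integration

section Korovkin

variable {μ : Measure ℝ}

theorem IsCompact.exists_abs_sub_le_add_mul_sq {s : Set ℝ} (hs : IsCompact s) {f : ℝ → ℝ}
    (hf : ContinuousOn f s) {ε : ℝ} (hε : 0 < ε) :
    ∃ c, 0 ≤ c ∧ ∀ x ∈ s, ∀ y ∈ s, |f y - f x| ≤ ε + c * (y - x) ^ 2 := by
  obtain ⟨M, hM0, hM⟩ := (hs.image_of_continuousOn hf).isBounded.exists_pos_norm_le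
  obtain ⟨δ, hδ, hfδ⟩ :=
    Metric.uniformContinuousOn_iff.mp (hs.uniformContinuousOn_of_continuous hf) ε hε
  refine ⟨2 * M / δ ^ 2, by positivity, fun x hx y hy => ?_⟩
  have hc : 0 ≤ 2 * M / δ ^ 2 * (y - x) ^ 2 := by positivity
  rcases lt_or_ge |y - x| δ with hyx | hyx
  · have := hfδ y hy x hx hyx
    rw [Real.dist_eq] at this
    linarith
  · have hfy := hM _ (mem_image_of_mem f hy)
    have hfx := hM _ (mem_image_of_mem f hx)
    rw [Real.norm_eq_abs] at hfy hfx
    have hδyx : δ ^ 2 ≤ (y - x) ^ 2 := by nlinarith [sq_abs (y - x)]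
    have : 2 * M ≤ 2 * M / δ ^ 2 * (y - x) ^ 2 := by
      rw [div_mul_eq_mul_div, le_div_iff₀ (by positivity)]
      nlinarith
    linarith [abs_sub (f y) (f x)]

theorem MeasureTheory.abs_integral_mul_sub_le {k f : ℝ → ℝ} (hk : Integrable k μ)
    (hk0 : ∀ᵐ y ∂μ, 0 ≤ k y) (hkf : Integrable (fun y => k y * f y) μ) {x ε c M : ℝ}
    (hkq : Integrable (fun y => k y * (y - x) ^ 2) μ) (hfx : |f x| ≤ M)
    (hf : ∀ᵐ y ∂μ, |f y - f x| ≤ ε + c * (y - x) ^ 2) :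
    |∫ y, k y * f y ∂μ - f x| ≤
      ε * ∫ y, k y ∂μ + c * ∫ y, k y * (y - x) ^ 2 ∂μ + M * |∫ y, k y ∂μ - 1| := by
  have hsplit : ∫ y, k y * f y ∂μ - f x =
      ∫ y, k y * (f y - f x) ∂μ + f x * (∫ y, k y ∂μ - 1) := by
    simp_rw [mul_sub]
    rw [integral_sub hkf (hk.mul_const (f x)), integral_mul_const]
    ring
  have hmain : |∫ y, k y * (f y - f x) ∂μ| ≤
      ε * ∫ y, k y ∂μ + c * ∫ y, k y * (y - x) ^ 2 ∂μ := by
    calc |∫ y, k y * (f y - f x) ∂μ| ≤ ∫ y, (ε * k y + c * (k y * (y - x) ^ 2)) ∂μ := by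
          rw [← Real.norm_eq_abs]
          refine norm_integral_le_of_norm_le ((hk.const_mul ε).fun_add (hkq.const_mul c)) ?_
          filter_upwards [hk0, hf] with y hky hfy
          rw [Real.norm_eq_abs, abs_mul, abs_of_nonneg hky]
          nlinarith [mul_le_mul_of_nonneg_left hfy hky]
      _ = _ := by
          rw [integral_add (hk.const_mul ε) (hkq.const_mul c), integral_const_mul,
            integral_const_mul]
  calc |∫ y, k y * f y ∂μ - f x|
      ≤ |∫ y, k y * (f y - f x) ∂μ| + |f x| * |∫ y, k y ∂μ - 1| := by
        rw [hsplit, ← abs_mul]; exact abs_add_le _ _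
    _ ≤ _ := by gcongr

theorem MeasureTheory.integral_mul_sub_sq {k : ℝ → ℝ} (h0 : Integrable k μ)
    (h1 : Integrable (fun y => k y * y) μ) (h2 : Integrable (fun y => k y * y ^ 2) μ) (x : ℝ) :
    Integrable (fun y => k y * (y - x) ^ 2) μ ∧
      ∫ y, k y * (y - x) ^ 2 ∂μ = (∫ y, k y * y ^ 2 ∂μ - x ^ 2)
        - 2 * x * (∫ y, k y * y ∂μ - x) + x ^ 2 * (∫ y, k y ∂μ - 1) := by
  have hexpand : (fun y => k y * (y - x) ^ 2) =
      fun y => k y * y ^ 2 + (-(2 * x) * (k y * y) + x ^ 2 * k y) := by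
    funext y; ring
  have hlower := (h1.const_mul (-(2 * x))).fun_add (h0.const_mul (x ^ 2))
  rw [hexpand]
  refine ⟨h2.fun_add hlower, ?_⟩
  rw [integral_add h2 hlower, integral_add (h1.const_mul _) (h0.const_mul _),
    integral_const_mul, integral_const_mul]
  ring

/-- Korovkin's theorem, for positive integral operators. -/
theorem tendstoUniformlyOn_integral_mul_of_moments {ι : Type*} {l : Filter ι} {s : Set ℝ}
    (hs : IsCompact s) (hμs : ∀ᵐ y ∂μ, y ∈ s) {K : ι → ℝ → ℝ → ℝ}
    (hK : ∀ᶠ i in l, ∀ x ∈ s, Integrable (K i x) μ ∧ ∀ᵐ y ∂μ, 0 ≤ K i x y)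
    (h0 : TendstoUniformlyOn (fun i x => ∫ y, K i x y ∂μ) (fun _ => 1) l s)
    (h1 : TendstoUniformlyOn (fun i x => ∫ y, K i x y * y ∂μ) (fun x => x) l s)
    (h2 : TendstoUniformlyOn (fun i x => ∫ y, K i x y * y ^ 2 ∂μ) (fun x => x ^ 2) l s)
    {f : ℝ → ℝ} (hf : ContinuousOn f s) :
    TendstoUniformlyOn (fun i x => ∫ y, K i x y * f y ∂μ) f l s := by
  rw [Metric.tendstoUniformlyOn_iff] at h0 h1 h2 ⊢
  intro ε hε
  obtain ⟨M, hM0, hM⟩ := (hs.image_of_continuousOn hf).isBounded.exists_pos_norm_le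
  obtain ⟨R, hR0, hR⟩ := hs.isBounded.exists_pos_norm_le
  obtain ⟨c, hc0, hfc⟩ := hs.exists_abs_sub_le_add_mul_sq hf (half_pos hε)
  set A := ε / 2 + M + c * (1 + R) ^ 2
  set η := ε / (2 * (A + 1))
  have hη : 0 < η := by positivity
  have hAη : A * η < ε / 2 := by
    rw [mul_div_assoc', div_lt_div_iff₀ (by positivity) two_pos]
    nlinarith
  have hfm : AEStronglyMeasurable f μ := hf.aestronglyMeasurable_of_ae_mem hs.measurableSet hμs
  have hfM : ∀ᵐ y ∂μ, ‖f y‖ ≤ M := hμs.mono fun y hy => hM _ (mem_image_of_mem f hy)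
  have hyR : ∀ᵐ y ∂μ, ‖y‖ ≤ R := hμs.mono hR
  have hy2R : ∀ᵐ y ∂μ, ‖y ^ 2‖ ≤ R ^ 2 := hyR.mono fun y hy => by
    rw [norm_pow]; exact pow_le_pow_left₀ (norm_nonneg y) hy 2
  filter_upwards [hK, h0 η hη, h1 η hη, h2 η hη] with i hKi hi0 hi1 hi2 x hx
  obtain ⟨hint, hpos⟩ := hKi x hx
  obtain ⟨hintq, hmoment⟩ := integral_mul_sub_sq hint (hint.mul_bdd aestronglyMeasurable_id hyR)
    (hint.mul_bdd (by fun_prop) hy2R) x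
  have hbound := abs_integral_mul_sub_le hint hpos (hint.mul_bdd hfm hfM) hintq
    (hM _ (mem_image_of_mem f hx)) (hμs.mono fun y hy => hfc x hx y hy)
  set m0 := ∫ y, K i x y ∂μ
  set m1 := ∫ y, K i x y * y ∂μ
  set m2 := ∫ y, K i x y * y ^ 2 ∂μ
  have e0 : |m0 - 1| < η := by rw [abs_sub_comm]; exact hi0 x hx
  have e1 : |m1 - x| < η := by rw [abs_sub_comm]; exact hi1 x hx
  have e2 : |m2 - x ^ 2| < η := by rw [abs_sub_comm]; exact hi2 x hx
  have hxR : |x| ≤ R := hR x hx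
  -- the second moment of `K i x` about `x`
  have hD : (m2 - x ^ 2) - 2 * x * (m1 - x) + x ^ 2 * (m0 - 1) ≤ (1 + R) ^ 2 * η := by
    have t1 : -(2 * x * (m1 - x)) ≤ 2 * R * η := by
      have := abs_mul x (m1 - x)
      nlinarith [neg_abs_le (x * (m1 - x)), mul_le_mul hxR e1.le (abs_nonneg _) hR0.le]
    have t2 : x ^ 2 * (m0 - 1) ≤ R ^ 2 * η := by
      have hx2 : x ^ 2 ≤ R ^ 2 := by nlinarith [sq_abs x, abs_nonneg x]
      nlinarith [le_abs_self (m0 - 1), sq_nonneg x]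
    nlinarith [le_abs_self (m2 - x ^ 2)]
  rw [hmoment] at hbound
  rw [Real.dist_eq, abs_sub_comm]
  have b0 : ε / 2 * m0 ≤ ε / 2 * (1 + η) := by
    gcongr; linarith [le_abs_self (m0 - 1)]
  have b1 := mul_le_mul_of_nonneg_left hD hc0
  have b2 := mul_le_mul_of_nonneg_left e0.le hM0.le
  have : ε / 2 * (1 + η) + c * ((1 + R) ^ 2 * η) + M * η = ε / 2 + A * η := by ring
  linarith

end Korovkin

theorem summable_abs_mul_pow_of_summable_mul_self_mul_pow {u : ℕ → ℝ} {r : ℝ} (hr0 : 0 ≤ r)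
    (hr1 : r < 1) (hu : Summable fun n => u n * u n * r ^ n) :
    Summable fun n => |u n * r ^ n| := by
  refine .of_nonneg_of_le (fun n => abs_nonneg _) (fun n => ?_)
    ((hu.add (summable_geometric_of_lt_one hr0 hr1)).div_const 2)
  have hrn : 0 ≤ r ^ n := pow_nonneg hr0 n
  rw [abs_mul, abs_of_nonneg hrn]
  nlinarith [mul_nonneg hrn (sq_nonneg (|u n| - 1)), sq_abs (u n)]

/-- `P_r(x, y)`; `tsum` makes it `0` wherever the series diverges. -/
noncomputable def orthoPoissonKernel (p : ℕ → ℝ[X]) (r x y : ℝ) : ℝ :=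
  ∑' n, (p n).eval x * (p n).eval y * r ^ n

section PoissonKernel

variable {μ : Measure ℝ} [IsProbabilityMeasure μ] {s : Set ℝ} {p : ℕ → ℝ[X]}

theorem integrable_orthoPoissonKernel_mul_and_hasSum (hs : IsCompact s) (hμs : ∀ᵐ y ∂μ, y ∈ s)
    (hnorm : ∀ n, ∫ y, (p n).eval y * (p n).eval y ∂μ = 1) {r x : ℝ} (hr : r ∈ Ioo 0 1)
    (hx : Summable fun n => (p n).eval x * (p n).eval x * r ^ n) {g : ℝ → ℝ}
    (hg : AEStronglyMeasurable g μ) {C : ℝ} (hgC : ∀ᵐ y ∂μ, ‖g y‖ ≤ C) :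
    Integrable (fun y => orthoPoissonKernel p r x y * g y) μ ∧
      HasSum (fun n => (p n).eval x * r ^ n * ∫ y, (p n).eval y * g y ∂μ)
        (∫ y, orthoPoissonKernel p r x y * g y ∂μ) := by
  have hK : orthoPoissonKernel p r x = fun y => ∑' n, (p n).eval x * r ^ n * (p n).eval y :=
    funext fun y => tsum_congr fun n => by ring
  have hint : ∀ q : ℝ[X], Integrable (fun y => q.eval y) μ := fun q =>
    q.continuous.continuousOn.integrable_of_ae_mem hs hμs
  rw [hK]
  exact hasSum_integral_tsum_mul (fun n => hint (p n))
    (fun n => integral_abs_le_one_of_integral_mul_self_eq_one (by simpa using hint (p n * p n))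
      (hnorm n))
    (summable_abs_mul_pow_of_summable_mul_self_mul_pow hr.1.le hr.2 hx) hg hgC

theorem integral_orthoPoissonKernel_mul_eval (hs : IsCompact s) (hμs : ∀ᵐ y ∂μ, y ∈ s)
    (horth : ∀ m n, ∫ y, (p m).eval y * (p n).eval y ∂μ = if m = n then 1 else 0)
    {r x : ℝ} (hr : r ∈ Ioo 0 1) (hx : Summable fun n => (p n).eval x * (p n).eval x * r ^ n)
    (j : ℕ) : ∫ y, orthoPoissonKernel p r x y * (p j).eval y ∂μ = r ^ j * (p j).eval x := by
  obtain ⟨C, hC⟩ := hs.exists_bound_of_continuousOn (p j).continuous.continuousOn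
  have h := (integrable_orthoPoissonKernel_mul_and_hasSum hs hμs
    (fun n => by rw [horth, if_pos rfl]) hr hx (p j).continuous.aestronglyMeasurable
    (hμs.mono hC)).2
  have hterm : (fun n => (p n).eval x * r ^ n * ∫ y, (p n).eval y * (p j).eval y ∂μ) =
      fun n => if n = j then (p j).eval x * r ^ j else 0 := by
    funext n
    rw [horth]
    split_ifs with hn
    · rw [hn, mul_one]
    · rw [mul_zero]
  rw [hterm] at h
  rw [h.unique (hasSum_ite_eq j _)]
  ring

theorem tendstoUniformlyOn_integral_orthoPoissonKernel_mul_eval (hs : IsCompact s)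
    (hμs : ∀ᵐ y ∂μ, y ∈ s) (hdeg : ∀ n, (p n).natDegree = n)
    (horth : ∀ m n, ∫ y, (p m).eval y * (p n).eval y ∂μ = if m = n then 1 else 0)
    (hsum : ∀ r ∈ Ioo (0 : ℝ) 1, ∀ x ∈ s, Summable fun n => (p n).eval x * (p n).eval x * r ^ n)
    (q : ℝ[X]) :
    TendstoUniformlyOn (fun r x => ∫ y, orthoPoissonKernel p r x y * q.eval y ∂μ)
      (fun x => q.eval x) (𝓝[Ioo 0 1] 1) s := by
  have hspan := span_range_eq_top_of_natDegree_eq (fun n h => by simpa [h] using horth n n) hdeg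
  have hint : ∀ᶠ r in 𝓝[Ioo 0 1] (1 : ℝ), ∀ x ∈ s, ∀ q : ℝ[X],
      Integrable (fun y => orthoPoissonKernel p r x y * q.eval y) μ := by
    filter_upwards [self_mem_nhdsWithin] with r hr x hx q
    obtain ⟨C, hC⟩ := hs.exists_bound_of_continuousOn q.continuous.continuousOn
    exact (integrable_orthoPoissonKernel_mul_and_hasSum hs hμs
      (fun n => by rw [horth, if_pos rfl]) hr (hsum r hr x hx) q.continuous.aestronglyMeasurable
      (hμs.mono hC)).1
  induction (hspan ▸ Submodule.mem_top : q ∈ Submodule.span ℝ (range p)) using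
    Submodule.span_induction with
  | mem _ hq =>
    obtain ⟨j, rfl⟩ := hq
    have hG := (TendstoUniformlyOn.of_continuous_uncurry (G := fun r x => r ^ j * (p j).eval x)
      (by fun_prop) hs 1).mono_filter (nhdsWithin_le_nhds (s := Ioo 0 1))
    simp only [one_pow, one_mul] at hG
    refine hG.congr ?_
    filter_upwards [self_mem_nhdsWithin] with r hr x hx
    exact (integral_orthoPoissonKernel_mul_eval hs hμs horth hr (hsum r hr x hx) j).symm
  | zero =>
    simpa only [eval_zero, mul_zero, integral_zero] using
      tendsto_const_nhds.tendstoUniformlyOn_const s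
  | add q₁ q₂ _ _ h₁ h₂ =>
    simp only [eval_add, mul_add]
    refine (h₁.add h₂).congr ?_
    filter_upwards [hint] with r hr x hx
    exact (integral_add (hr x hx q₁) (hr x hx q₂)).symm
  | smul a q _ h =>
    simp only [eval_smul, smul_eq_mul, mul_left_comm _ a, integral_const_mul]
    exact Real.uniformContinuous_const_mul.comp_tendstoUniformlyOn h

end PoissonKernel

open MeasureTheory in
theorem poisson_kernel_approximate_identity_general (a b : ℝ)
    (μ : Measure ℝ) [IsProbabilityMeasure μ] (hsupp : μ (Set.Icc a b)ᶜ = 0)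
    (p : ℕ → Polynomial ℝ) (hdeg : ∀ n, (p n).natDegree = n)
    (horth : ∀ m n, ∫ y, (p m).eval y * (p n).eval y ∂μ = if m = n then 1 else 0)
    (hsum : ∀ r ∈ Set.Ioo (0:ℝ) 1, ∀ x ∈ Set.Icc a b, ∀ y ∈ Set.Icc a b,
      Summable (fun n => (p n).eval x * (p n).eval y * r ^ n))
    (hpos : ∀ r ∈ Set.Ioo (0:ℝ) 1, ∀ x ∈ Set.Icc a b, ∀ y ∈ Set.Icc a b,
      0 ≤ ∑' n, (p n).eval x * (p n).eval y * r ^ n)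
    (f : ℝ → ℝ) (hcont : ContinuousOn f (Set.Icc a b)) :
    TendstoUniformlyOn
      (fun r x => ∫ y, (∑' n, (p n).eval x * (p n).eval y * r ^ n) * f y ∂μ)
      f (nhdsWithin 1 (Set.Ioo 0 1)) (Set.Icc a b) := by
  have hμs : ∀ᵐ y ∂μ, y ∈ Icc a b := mem_ae_iff.mpr hsupp
  have hdiag := fun r hr x hx => hsum r hr x hx x hx
  have hmoment := tendstoUniformlyOn_integral_orthoPoissonKernel_mul_eval isCompact_Icc hμs
    hdeg horth hdiag
  have hK : ∀ᶠ r in 𝓝[Ioo 0 1] (1 : ℝ), ∀ x ∈ Icc a b,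
      Integrable (orthoPoissonKernel p r x) μ ∧ ∀ᵐ y ∂μ, 0 ≤ orthoPoissonKernel p r x y := by
    filter_upwards [self_mem_nhdsWithin] with r hr x hx
    refine ⟨?_, hμs.mono fun y hy => hpos r hr x hx y hy⟩
    simpa using (integrable_orthoPoissonKernel_mul_and_hasSum isCompact_Icc hμs
      (fun n => by rw [horth, if_pos rfl]) hr (hdiag r hr x hx) aestronglyMeasurable_const
      (C := 1) (ae_of_all _ fun _ => norm_one.le)).1
  have h0 := hmoment 1
  have h1 := hmoment X
  have h2 := hmoment (X ^ 2)
  simp only [eval_one, mul_one, eval_X, eval_pow] at h0 h1 h2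
  exact tendstoUniformlyOn_integral_mul_of_moments isCompact_Icc hμs hK h0 h1 h2 hcont

open MeasureTheory in
/-- Korovkin-type theorem: a nonnegative Poisson kernel of orthonormal polynomials
is an approximate identity as $r \to 1^-$, uniformly on $[a,b]$. -/
theorem poisson_kernel_approximate_identity (a b : ℝ) (hab : a < b)
    (μ : Measure ℝ) [IsProbabilityMeasure μ] (hsupp : μ (Set.Icc a b)ᶜ = 0)
    (p : ℕ → Polynomial ℝ) (hdeg : ∀ n, (p n).natDegree = n)
    (horth : ∀ m n, ∫ y, (p m).eval y * (p n).eval y ∂μ = if m = n then 1 else 0)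
    (hsum : ∀ r ∈ Set.Ioo (0:ℝ) 1, ∀ x ∈ Set.Icc a b, ∀ y ∈ Set.Icc a b,
      Summable (fun n => (p n).eval x * (p n).eval y * r ^ n))
    (hpos : ∀ r ∈ Set.Ioo (0:ℝ) 1, ∀ x ∈ Set.Icc a b, ∀ y ∈ Set.Icc a b,
      0 ≤ ∑' n, (p n).eval x * (p n).eval y * r ^ n)
    (f : ℝ → ℝ) (hcont : ContinuousOn f (Set.Icc a b)) :
    TendstoUniformlyOn
      (fun r x => ∫ y, (∑' n, (p n).eval x * (p n).eval y * r ^ n) * f y ∂μ)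
      f (nhdsWithin 1 (Set.Ioo 0 1)) (Set.Icc a b) :=
  poisson_kernel_approximate_identity_general a b μ hsupp p hdeg horth hsum hpos f hcont
end
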